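/- arXiv:2102.03432 — 2 statements merged into one kernel-verified Lean document; each statement's English description precedes it below -/
import Mathlib

section
/- Let X be a set and k₁, k₂ : X × X → ℝ be kernels. Then their pointwise product (x, y) ↦ k₁(x, y) · k₂(x, y) is a kernel on X. -/
/-!
A function is a kernel exactly when every matrix `(k (x i) (x j))ᵢⱼ` it induces on finitely many
points is positive semidefinite. The matrix induced by the pointwise product is the Hadamard
product of the two induced matrices, so the claim is the Schur product theorem.
-/

open Finset

/-- A kernel on a set `X`: a symmetric, positive semi-definite function `X × X → ℝ`. -/
def IsKernel {X : Type*} (k : X → X → ℝ) : Prop :=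
  (∀ x y, k x y = k y x) ∧
  ∀ (n : ℕ) (x : Fin n → X) (c : Fin n → ℝ),
    0 ≤ ∑ i, ∑ j, c i * c j * k (x i) (x j)

open Matrix

section KernelMatrix

variable {X ι : Type*}

def kernelMatrix (k : X → X → ℝ) (x : ι → X) : Matrix ι ι ℝ :=
  Matrix.of fun i j => k (x i) (x j)

theorem kernelMatrix_mul (k₁ k₂ : X → X → ℝ) (x : ι → X) :
    kernelMatrix (fun a b => k₁ a b * k₂ a b) x = kernelMatrix k₁ x ⊙ kernelMatrix k₂ x :=
  rfl

theorem star_dotProduct_kernelMatrix_mulVec [Fintype ι] (k : X → X → ℝ) (x : ι → X)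
    (c : ι → ℝ) :
    star c ⬝ᵥ (kernelMatrix k x *ᵥ c) = ∑ i, ∑ j, c i * c j * k (x i) (x j) := by
  simp only [dotProduct, mulVec, kernelMatrix, of_apply, star_trivial, Finset.mul_sum]
  exact Finset.sum_congr rfl fun i _ => Finset.sum_congr rfl fun j _ => by ring

theorem isKernel_iff_posSemidef (k : X → X → ℝ) :
    IsKernel k ↔ ∀ (n : ℕ) (x : Fin n → X), (kernelMatrix k x).PosSemidef := by
  simp only [posSemidef_iff_dotProduct_mulVec, star_dotProduct_kernelMatrix_mulVec]
  constructor
  · rintro ⟨hsymm, hnonneg⟩ n x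
    refine ⟨?_, hnonneg n x⟩
    ext i j
    exact hsymm (x j) (x i)
  · intro h
    refine ⟨fun a b => ?_, fun n x => (h n x).2⟩
    -- symmetry of the 2 × 2 kernel matrix at the points `a`, `b`
    simpa [kernelMatrix] using congrFun (congrFun (h 2 ![a, b]).1 1) 0

end KernelMatrix

/-- The pointwise product of two kernels is a kernel. -/
theorem kernel_mul {X : Type*} (k₁ k₂ : X → X → ℝ)
    (h₁ : IsKernel k₁) (h₂ : IsKernel k₂) :
    IsKernel (fun x y => k₁ x y * k₂ x y) := by
  rw [isKernel_iff_posSemidef] at h₁ h₂ ⊢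
  intro n x
  rw [kernelMatrix_mul]
  exact (h₁ n x).hadamard (h₂ n x)
end

section
/- Let M be a symmetric positive definite n × n real matrix and l > 0. Then the anisotropic squared exponential kernel k(x, y) = exp(−(x − y)ᵀ M (x − y) / l) on ℝⁿ is a kernel: it is symmetric and positive semi-definite. -/
open Finset Matrix

/-!
With `q x y = xᵀ M y`, the exponent splits as `-q(xᵢ - xⱼ, xᵢ - xⱼ)/l = -q(xᵢ, xᵢ)/l - q(xⱼ, xⱼ)/l +
2 q(xᵢ, xⱼ)/l`, so the Gram matrix of the kernel at `x₁, …, x_N` is the Hadamard product of the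
rank-one matrix `d dᵀ`, `dᵢ = exp(-q(xᵢ, xᵢ)/l)`, with the entrywise exponential of the positive
semidefinite matrix `(2 q(xᵢ, xⱼ)/l)ᵢⱼ`. Entrywise powers of a positive semidefinite matrix are
positive semidefinite by the Schur product theorem, and the exponential series has nonnegative
coefficients, so the entrywise exponential is a limit of positive semidefinite matrices.
-/

open scoped ComplexOrder Nat

namespace Matrix

variable {ι 𝕜 : Type*} [RCLike 𝕜]

theorem posSemidef_allOnes : (of fun _ _ : ι => (1 : 𝕜)).PosSemidef := by
  refine ⟨by ext; simp, fun x => ?_⟩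
  convert star_mul_self_nonneg (x.sum fun _ xi => xi) using 1
  simp only [Finsupp.sum, RCLike.star_def, of_apply, mul_one, star_sum, mul_sum, sum_mul]
  exact Finset.sum_comm

theorem PosSemidef.map_pow {A : Matrix ι ι 𝕜} (hA : A.PosSemidef) (m : ℕ) :
    (A.map (· ^ m)).PosSemidef := by
  induction m with
  | zero => convert (posSemidef_allOnes (ι := ι) (𝕜 := 𝕜)) using 1; ext; simp
  | succ m ih => convert ih.hadamard hA using 1; ext; simp [pow_succ]

theorem PosSemidef.of_hasSum {β : Type*} {A : β → Matrix ι ι 𝕜} {B : Matrix ι ι 𝕜}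
    (hA : ∀ m, (A m).PosSemidef) (hB : HasSum A B) : B.PosSemidef := by
  have hentry : ∀ i j, HasSum (fun m => A m i j) (B i j) := fun i j =>
    Pi.hasSum.mp (Pi.hasSum.mp hB i) j
  refine ⟨?_, fun x => ?_⟩
  · refine hB.matrix_conjTranspose.unique ?_
    simpa only [(hA _).isHermitian.eq] using hB
  · have hQ : HasSum (fun m => x.sum fun i xi => x.sum fun j xj => star xi * A m i j * xj)
        (x.sum fun i xi => x.sum fun j xj => star xi * B i j * xj) :=
      hasSum_sum fun i _ => hasSum_sum fun j _ => ((hentry i j).mul_left _).mul_right _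
    exact hQ.nonneg fun m => (hA m).2 x

theorem PosSemidef.map_exp {A : Matrix ι ι ℝ} (hA : A.PosSemidef) :
    (A.map Real.exp).PosSemidef := by
  refine PosSemidef.of_hasSum (fun m => (hA.map_pow m).smul (by positivity : (0 : ℝ) ≤ (m ! : ℝ)⁻¹))
    (Pi.hasSum.mpr fun i => Pi.hasSum.mpr fun j => ?_)
  simpa [Real.exp_eq_exp_ℝ] using NormedSpace.exp_series_hasSum_exp' (𝕂 := ℝ) (A i j)

theorem PosSemidef.gram_mulVec {m : Type*} [Fintype m] [Finite ι] {M : Matrix m m ℝ}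
    (hM : M.PosSemidef) (x : ι → m → ℝ) : (of fun i j => x i ⬝ᵥ M *ᵥ x j).PosSemidef := by
  convert hM.mul_mul_conjTranspose_same (of x) using 1
  ext i j
  simp only [dotProduct, mulVec, mul_sum, mul_left_comm, of_apply, mul_apply, mul_comm,
    conjTranspose_eq_transpose_of_trivial, transpose_apply]
  exact Finset.sum_comm

theorem IsSymm.sub_dotProduct_mulVec_sub {m R : Type*} [Fintype m] [CommRing R]
    {M : Matrix m m R} (hM : M.IsSymm) (x y : m → R) :
    (x - y) ⬝ᵥ M *ᵥ (x - y) = x ⬝ᵥ M *ᵥ x - 2 * (x ⬝ᵥ M *ᵥ y) + y ⬝ᵥ M *ᵥ y := by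
  have hswap : y ⬝ᵥ M *ᵥ x = x ⬝ᵥ M *ᵥ y := by
    rw [dotProduct_mulVec, ← mulVec_transpose, hM.eq, dotProduct_comm]
  simp only [mulVec_sub, sub_dotProduct, dotProduct_sub, hswap]
  ring

end Matrix

theorem isKernel_of_posSemidef {X : Type*} {k : X → X → ℝ}
    (hk : ∀ (N : ℕ) (x : Fin N → X), (of fun i j => k (x i) (x j)).PosSemidef) : IsKernel k := by
  refine ⟨fun x y => ?_, fun N x c => ?_⟩
  · simpa using (hk 2 ![y, x]).isHermitian.apply 0 1
  · simpa [dotProduct, mulVec, Finset.mul_sum, mul_assoc, mul_comm, mul_left_comm] using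
      (hk N x).dotProduct_mulVec_nonneg c

/-- The anisotropic squared exponential kernel
`k x y = exp (−(x − y)ᵀ M (x − y) / l)` on `ℝⁿ`, with `M` symmetric positive definite
and `l > 0`, is a kernel. -/
theorem anisotropic_squared_exponential_isKernel {n : ℕ}
    (M : Matrix (Fin n) (Fin n) ℝ) (hM : M.PosDef) (l : ℝ) (hl : 0 < l) :
    IsKernel (fun x y : Fin n → ℝ =>
      Real.exp (-((x - y) ⬝ᵥ M.mulVec (x - y)) / l)) := by
  have hMsymm : M.IsSymm := isHermitian_iff_isSymm.mp hM.isHermitian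
  refine isKernel_of_posSemidef fun N x => ?_
  set d : Fin N → ℝ := fun i => Real.exp (-(x i ⬝ᵥ M *ᵥ x i) / l)
  have hG := (hM.posSemidef.gram_mulVec x).smul (a := 2 / l) (by positivity)
  have hK : (of fun i j => Real.exp (-((x i - x j) ⬝ᵥ M *ᵥ (x i - x j)) / l)) =
      vecMulVec d d ⊙ ((2 / l) • of fun i j => x i ⬝ᵥ M *ᵥ x j).map Real.exp := by
    ext i j
    simp only [of_apply, hadamard_apply, vecMulVec_apply, map_apply, Matrix.smul_apply,
      smul_eq_mul, d, ← Real.exp_add, hMsymm.sub_dotProduct_mulVec_sub]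
    congr 1
    ring
  rw [hK]
  exact (posSemidef_vecMulVec_self_star d).hadamard hG.map_exp
end
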